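/- Contraction C2 preserves the intersection data: let A be an m×m symmetric matrix over ZMod 2 (with m ≥ 3) and let v, p, q be three pairwise distinct indices such that A v v = 1, A v p = 1, A v q = 1, A v k = 0 for every index k not in {v,p,q}, and A p q = 0 (i.e., v is an odd vertex of valency 2, attached exactly to p and q, which are not adjacent to each other). Let B be the (m−1)×(m−1) matrix obtained from A by deleting the row and column indexed by v and adding 1 to each of the entries (p,p), (q,q), (p,q) and (q,p) (flipping the parities of p and q and making them adjacent). Then det B = det A and rank A = rank B + 1 (so the corank is preserved). -/

import Mathlib

/-!
Since `v` is odd, `A v v = 1` is a pivot, and eliminating the row and column of `v` replaces the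
remaining block by its Schur complement `A k l - A k v * A v l`, which has the same determinant and
rank one less. Row `v` is the indicator vector of `{p, q}`, so in characteristic two the Schur
complement is `A` with `1` added at the four entries indexed by `{p, q} × {p, q}`: the contracted
matrix.
-/

open Matrix

theorem Submodule.finrank_prod {K V W : Type*} [Field K] [AddCommGroup V] [AddCommGroup W]
    [Module K V] [Module K W] [FiniteDimensional K V] [FiniteDimensional K W]
    (p : Submodule K V) (q : Submodule K W) :
    Module.finrank K (p.prod q) = Module.finrank K p + Module.finrank K q := by
  have hinj : Function.Injective (p.subtype.prodMap q.subtype) :=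
    Subtype.val_injective.prodMap Subtype.val_injective
  rw [← Module.finrank_prod, ← LinearMap.finrank_range_of_inj hinj, LinearMap.range_prodMap,
    Submodule.range_subtype, Submodule.range_subtype]

def Equiv.unitSumSubtypeNe {ι : Type*} [DecidableEq ι] (v : ι) :
    Unit ⊕ {k // k ≠ v} ≃ ι :=
  (Equiv.sumComm _ _).trans
    ((Equiv.optionEquivSumPUnit.{0} _).symm.trans (Equiv.optionSubtypeNe v))

namespace Matrix

section BlockRank

variable {K : Type*} [Field K] {m n : Type*} [Fintype m] [Fintype n]

theorem rank_fromBlocks_zero_zero (A : Matrix m m K) (D : Matrix n n K) :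
    (fromBlocks A 0 0 D).rank = A.rank + D.rank := by
  have hlin : (fromBlocks A 0 0 D).mulVecLin =
      ((LinearEquiv.sumArrowLequivProdArrow m n K K).symm : _ →ₗ[K] _) ∘ₗ
        (A.mulVecLin.prodMap D.mulVecLin) ∘ₗ
        (LinearEquiv.sumArrowLequivProdArrow m n K K : _ →ₗ[K] _) := by
    refine LinearMap.ext fun x => funext fun i => ?_
    cases i <;>
      simp [fromBlocks_mulVec, LinearEquiv.sumArrowLequivProdArrow, Equiv.sumArrowEquivProdArrow]
  rw [rank, hlin, LinearMap.range_comp,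
    LinearMap.range_comp_of_range_eq_top _ (LinearEquiv.range _), LinearEquiv.finrank_map_eq,
    LinearMap.range_prodMap, Submodule.finrank_prod]
  rfl

theorem rank_fromBlocks_of_invertible₁₁ [DecidableEq m] [DecidableEq n] (A : Matrix m m K)
    (B : Matrix m n K) (C : Matrix n m K) (D : Matrix n n K) [Invertible A] :
    (fromBlocks A B C D).rank = A.rank + (D - C * ⅟A * B).rank := by
  have hL : IsUnit (fromBlocks 1 0 (C * ⅟A) 1 : Matrix (m ⊕ n) (m ⊕ n) K).det := by simp
  have hR : IsUnit (fromBlocks 1 (⅟A * B) 0 1 : Matrix (m ⊕ n) (m ⊕ n) K).det := by simp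
  rw [fromBlocks_eq_of_invertible₁₁, rank_mul_eq_left_of_isUnit_det _ _ hR,
    rank_mul_eq_right_of_isUnit_det _ _ hL, rank_fromBlocks_zero_zero]

end BlockRank

section Pivot

variable {R ι : Type*}

def pivotComplement [Ring R] (A : Matrix ι ι R) (v : ι) :
    Matrix {k // k ≠ v} {k // k ≠ v} R :=
  of fun k l => A k l - A k v * A v l

theorem sub_mul_eq_pivotComplement [Ring R] (A : Matrix ι ι R) (v : ι) :
    A.submatrix (Subtype.val : {k // k ≠ v} → ι) Subtype.val -
        (of fun k _ => A k v : Matrix {k // k ≠ v} Unit R) *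
          (of fun _ l => A v l : Matrix Unit {k // k ≠ v} R) =
      pivotComplement A v := by
  ext k l
  simp [pivotComplement, mul_apply]

variable [DecidableEq ι]

theorem submatrix_unitSumSubtypeNe [Ring R] {A : Matrix ι ι R} {v : ι} (hv : A v v = 1) :
    A.submatrix (Equiv.unitSumSubtypeNe v) (Equiv.unitSumSubtypeNe v) =
      fromBlocks 1 (of fun _ l => A v l : Matrix Unit {k // k ≠ v} R)
        (of fun k _ => A k v : Matrix {k // k ≠ v} Unit R)
        (A.submatrix Subtype.val Subtype.val) := by
  ext (_ | k) (_ | l) <;> simp [Equiv.unitSumSubtypeNe, Equiv.optionEquivSumPUnit, hv]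

theorem pivotComplement_eq_add_single [CommRing R] [CharP R 2] {A : Matrix ι ι R}
    (hA : A.IsSymm) {v p q : ι} (hvp : v ≠ p) (hvq : v ≠ q) (hpq : p ≠ q)
    (hAvp : A v p = 1) (hAvq : A v q = 1)
    (hval : ∀ k, k ≠ v → k ≠ p → k ≠ q → A v k = 0) :
    pivotComplement A v =
      A.submatrix (Subtype.val : {k : ι // k ≠ v} → ι) Subtype.val
        + single ⟨p, hvp.symm⟩ ⟨p, hvp.symm⟩ 1 + single ⟨q, hvq.symm⟩ ⟨q, hvq.symm⟩ 1
        + single ⟨p, hvp.symm⟩ ⟨q, hvq.symm⟩ 1 + single ⟨q, hvq.symm⟩ ⟨p, hvp.symm⟩ 1 := by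
  have hrow : ∀ k, k ≠ v → A v k = (if p = k then 1 else 0) + (if q = k then 1 else 0) := by
    intro k hk
    by_cases hkp : p = k
    · subst hkp; simp [hAvp, hpq.symm]
    by_cases hkq : q = k
    · subst hkq; simp [hAvq, hkp]
    simp [hkp, hkq, hval k hk (Ne.symm hkp) (Ne.symm hkq)]
  ext ⟨k, hk⟩ ⟨l, hl⟩
  simp only [pivotComplement, of_apply, Matrix.add_apply, submatrix_apply, single_apply,
    Subtype.mk.injEq, hA.apply v k, hrow k hk, hrow l hl, CharTwo.sub_eq_add]
  simp only [add_mul, mul_add, ite_zero_mul_ite_zero, mul_one]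
  abel

variable [Fintype ι]

theorem det_pivotComplement [CommRing R] {A : Matrix ι ι R} {v : ι} (hv : A v v = 1) :
    (pivotComplement A v).det = A.det := by
  rw [← det_submatrix_equiv_self (Equiv.unitSumSubtypeNe v), submatrix_unitSumSubtypeNe hv,
    det_fromBlocks_one₁₁, sub_mul_eq_pivotComplement]

theorem rank_eq_rank_pivotComplement_add_one {K : Type*} [Field K] {A : Matrix ι ι K} {v : ι}
    (hv : A v v = 1) : A.rank = (pivotComplement A v).rank + 1 := by
  let _ : Invertible (1 : Matrix Unit Unit K) := invertibleOne
  rw [← rank_submatrix A (Equiv.unitSumSubtypeNe v) (Equiv.unitSumSubtypeNe v),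
    submatrix_unitSumSubtypeNe hv, rank_fromBlocks_of_invertible₁₁, invOf_one, Matrix.mul_one,
    sub_mul_eq_pivotComplement, rank_one, Fintype.card_unit, add_comm]

end Pivot

end Matrix

theorem contraction_C2_general {m : ℕ} (A : Matrix (Fin m) (Fin m) (ZMod 2))
    (hA : A.IsSymm) (v p q : Fin m)
    (hvp : v ≠ p) (hvq : v ≠ q) (hpq : p ≠ q)
    (hvv : A v v = 1) (hAvp : A v p = 1) (hAvq : A v q = 1)
    (hval : ∀ k, k ≠ v → k ≠ p → k ≠ q → A v k = 0) :
    (A.submatrix (Subtype.val : {k : Fin m // k ≠ v} → Fin m) Subtype.val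
        + Matrix.single (⟨p, hvp.symm⟩ : {k : Fin m // k ≠ v}) (⟨p, hvp.symm⟩ : {k : Fin m // k ≠ v}) 1
        + Matrix.single (⟨q, hvq.symm⟩ : {k : Fin m // k ≠ v}) (⟨q, hvq.symm⟩ : {k : Fin m // k ≠ v}) 1
        + Matrix.single (⟨p, hvp.symm⟩ : {k : Fin m // k ≠ v}) (⟨q, hvq.symm⟩ : {k : Fin m // k ≠ v}) 1
        + Matrix.single (⟨q, hvq.symm⟩ : {k : Fin m // k ≠ v}) (⟨p, hvp.symm⟩ : {k : Fin m // k ≠ v}) 1).det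
        = A.det ∧
      A.rank = (A.submatrix (Subtype.val : {k : Fin m // k ≠ v} → Fin m) Subtype.val
        + Matrix.single (⟨p, hvp.symm⟩ : {k : Fin m // k ≠ v}) (⟨p, hvp.symm⟩ : {k : Fin m // k ≠ v}) 1
        + Matrix.single (⟨q, hvq.symm⟩ : {k : Fin m // k ≠ v}) (⟨q, hvq.symm⟩ : {k : Fin m // k ≠ v}) 1
        + Matrix.single (⟨p, hvp.symm⟩ : {k : Fin m // k ≠ v}) (⟨q, hvq.symm⟩ : {k : Fin m // k ≠ v}) 1
        + Matrix.single (⟨q, hvq.symm⟩ : {k : Fin m // k ≠ v}) (⟨p, hvp.symm⟩ : {k : Fin m // k ≠ v}) 1).rank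
        + 1 := by
  rw [← pivotComplement_eq_add_single hA hvp hvq hpq hAvp hAvq hval]
  exact ⟨det_pivotComplement hvv, rank_eq_rank_pivotComplement_add_one hvv⟩

/-- Contraction C2: blowing down an odd curve `v` of valency 2 attached exactly to
non-adjacent `p` and `q` (delete the row and column of `v`, flip the parities of `p`
and `q`, and make them adjacent) preserves the determinant and drops the rank of the
mod-2 intersection matrix by exactly one (so the corank is preserved). -/
theorem contraction_C2 {m : ℕ} (hm : 3 ≤ m) (A : Matrix (Fin m) (Fin m) (ZMod 2))
    (hA : A.IsSymm) (v p q : Fin m)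
    (hvp : v ≠ p) (hvq : v ≠ q) (hpq : p ≠ q)
    (hvv : A v v = 1) (hAvp : A v p = 1) (hAvq : A v q = 1)
    (hval : ∀ k, k ≠ v → k ≠ p → k ≠ q → A v k = 0)
    (hApq : A p q = 0) :
    (A.submatrix (Subtype.val : {k : Fin m // k ≠ v} → Fin m) Subtype.val
        + Matrix.single (⟨p, hvp.symm⟩ : {k : Fin m // k ≠ v}) (⟨p, hvp.symm⟩ : {k : Fin m // k ≠ v}) 1
        + Matrix.single (⟨q, hvq.symm⟩ : {k : Fin m // k ≠ v}) (⟨q, hvq.symm⟩ : {k : Fin m // k ≠ v}) 1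
        + Matrix.single (⟨p, hvp.symm⟩ : {k : Fin m // k ≠ v}) (⟨q, hvq.symm⟩ : {k : Fin m // k ≠ v}) 1
        + Matrix.single (⟨q, hvq.symm⟩ : {k : Fin m // k ≠ v}) (⟨p, hvp.symm⟩ : {k : Fin m // k ≠ v}) 1).det
        = A.det ∧
      A.rank = (A.submatrix (Subtype.val : {k : Fin m // k ≠ v} → Fin m) Subtype.val
        + Matrix.single (⟨p, hvp.symm⟩ : {k : Fin m // k ≠ v}) (⟨p, hvp.symm⟩ : {k : Fin m // k ≠ v}) 1
        + Matrix.single (⟨q, hvq.symm⟩ : {k : Fin m // k ≠ v}) (⟨q, hvq.symm⟩ : {k : Fin m // k ≠ v}) 1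
        + Matrix.single (⟨p, hvp.symm⟩ : {k : Fin m // k ≠ v}) (⟨q, hvq.symm⟩ : {k : Fin m // k ≠ v}) 1
        + Matrix.single (⟨q, hvq.symm⟩ : {k : Fin m // k ≠ v}) (⟨p, hvp.symm⟩ : {k : Fin m // k ≠ v}) 1).rank
        + 1 :=
  contraction_C2_general A hA v p q hvp hvq hpq hvv hAvp hAvq hval
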